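/- For a poset P, the lattice Co(P) is completely subdirectly irreducible (i.e., it has a least nonzero complete congruence) if and only if there exists a least, under inclusion, nonempty D-closed subset of P. -/

import Mathlib

/-! Common definitions: lattices of order-convex subsets of a poset,
length of a poset, the identities (S), (U), (B), (L2), (H_n), (H_{m,n}),
join-irreducibility, the join-dependency relation, join-seeds,
the posets P_{I,J}, tree-like posets, D-closed sets,
and complete lattice congruences. -/

open Set

/-- The lattice `Co P` of all order-convex subsets of a poset `P`. -/
def Co (P : Type*) [PartialOrder P] : Type _ := {s : Set P // s.OrdConnected}

namespace Co

variable {P : Type*} [PartialOrder P]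

instance : PartialOrder (Co P) := Subtype.partialOrder _

instance : InfSet (Co P) :=
  ⟨fun S => ⟨⋂ s ∈ S, s.1, Set.ordConnected_biInter fun s _ => s.2⟩⟩

noncomputable instance : CompleteLattice (Co P) :=
  completeLatticeOfInf (Co P) (by
    intro S
    constructor
    · intro t ht
      exact Set.biInter_subset_of_mem (t := fun s => s.1) ht
    · intro b hb
      exact Set.subset_iInter₂ fun t ht => hb ht)

/-- The order-convex subset of `P` with underlying set `X`. -/
def mk' (X : Set P) (hX : X.OrdConnected) : Co P := ⟨X, hX⟩

/-- The singleton `{p}`, as an order-convex set. -/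
def sngl (p : P) : Co P := ⟨{p}, Set.ordConnected_singleton⟩

/-- The empty order-convex set. -/
def emp : Co P := ⟨∅, Set.ordConnected_empty⟩

end Co

/-- `lengthLE P n` states that the poset `P` has length at most `n`, that is,
every finite chain of `P` has at most `n + 1` elements. -/
def lengthLE (P : Type*) [PartialOrder P] (n : ℕ) : Prop :=
  ∀ C : Finset P, IsChain (· ≤ ·) (C : Set P) → C.card ≤ n + 1

section Identities

/-- The Stirlitz identity (S). -/
def IdS (L : Type*) [Lattice L] : Prop :=
  ∀ a b b₀ b₁ c : L,
    a ⊓ ((b ⊓ (b₀ ⊔ b₁)) ⊔ c) =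
      (a ⊓ (b ⊓ (b₀ ⊔ b₁)))
      ⊔ (a ⊓ (b₀ ⊔ c) ⊓ ((b ⊓ (b₀ ⊔ b₁) ⊓ (a ⊔ b₀)) ⊔ c))
      ⊔ (a ⊓ (b₁ ⊔ c) ⊓ ((b ⊓ (b₀ ⊔ b₁) ⊓ (a ⊔ b₁)) ⊔ c))

/-- The Udav identity (U). -/
def IdU (L : Type*) [Lattice L] : Prop :=
  ∀ x x₀ x₁ x₂ : L,
    x ⊓ (x₀ ⊔ x₁) ⊓ (x₁ ⊔ x₂) ⊓ (x₀ ⊔ x₂) =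
      (x ⊓ x₀ ⊓ (x₁ ⊔ x₂)) ⊔ (x ⊓ x₁ ⊓ (x₀ ⊔ x₂)) ⊔ (x ⊓ x₂ ⊓ (x₀ ⊔ x₁))

/-- The Bond identity (B). -/
def IdB (L : Type*) [Lattice L] : Prop :=
  ∀ x a₀ a₁ b₀ b₁ : L,
    x ⊓ (a₀ ⊔ a₁) ⊓ (b₀ ⊔ b₁) =
      (x ⊓ a₀ ⊓ (b₀ ⊔ b₁)) ⊔ (x ⊓ a₁ ⊓ (b₀ ⊔ b₁))
      ⊔ (x ⊓ b₀ ⊓ (a₀ ⊔ a₁)) ⊔ (x ⊓ b₁ ⊓ (a₀ ⊔ a₁))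
      ⊔ (x ⊓ (a₀ ⊔ a₁) ⊓ (b₀ ⊔ b₁) ⊓ (a₀ ⊔ b₀) ⊓ (a₁ ⊔ b₁))
      ⊔ (x ⊓ (a₀ ⊔ a₁) ⊓ (b₀ ⊔ b₁) ⊓ (a₀ ⊔ b₁) ⊓ (a₁ ⊔ b₀))

/-- The identity (L₂). -/
def IdL2 (L : Type*) [Lattice L] : Prop :=
  ∀ a b b' c c' : L,
    a ⊓ ((b ⊓ (c ⊔ c')) ⊔ b') =
      (a ⊓ b ⊓ (c ⊔ c')) ⊔ (a ⊓ ((b ⊓ c) ⊔ b')) ⊔ (a ⊓ ((b ⊓ c') ⊔ b'))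

variable {L : Type*} [Lattice L]

/-- The lattice polynomial `U_{i,n}` (in the variables `x₀, …, xₙ, x'₁, …, x'ₙ`). -/
def Upoly (x x' : ℕ → L) (n : ℕ) (i : ℕ) : L :=
  if h : n ≤ i then x n
  else x i ⊓ (Upoly x x' n (i + 1) ⊔ x' (i + 1))
  termination_by n - i
  decreasing_by omega

/-- The lattice polynomial `V_{i,j,n}`. -/
def Vpoly (x x' : ℕ → L) (n i : ℕ) (j : ℕ) : L :=
  if h : i ≤ j then (x i ⊓ Upoly x x' n (i + 1)) ⊔ (x i ⊓ x' (i + 1))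
  else x j ⊓ (Vpoly x x' n i (j + 1) ⊔ x' (j + 1))
  termination_by i - j
  decreasing_by omega

/-- The lattice polynomial `W_{i,j,n}`. -/
def Wpoly (x x' : ℕ → L) (n i : ℕ) (j : ℕ) : L :=
  if h : i ≤ j then
    x i ⊓ (x' (i + 1) ⊔ x' (i + 2)) ⊓ ((Upoly x x' n (i + 1) ⊓ (x i ⊔ x' (i + 2))) ⊔ x' (i + 1))
  else x j ⊓ (Wpoly x x' n i (j + 1) ⊔ x' (j + 1))
  termination_by i - j
  decreasing_by omega

/-- `bigJoin f k = f 0 ⊔ f 1 ⊔ ⋯ ⊔ f k`. -/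
def bigJoin (f : ℕ → L) : ℕ → L
  | 0 => f 0
  | k + 1 => bigJoin f k ⊔ f (k + 1)

end Identities

/-- The identity (Hₙ) : `Uₙ = ⋁_{0 ≤ i ≤ n-1} V_{i,n} ∨ ⋁_{0 ≤ i ≤ n-2} W_{i,n}`
(intended for `n ≥ 1`). -/
def IdH (n : ℕ) (L : Type*) [Lattice L] : Prop :=
  ∀ x x' : ℕ → L,
    Upoly x x' n 0 =
      bigJoin (fun i =>
        if i + 2 ≤ n then Vpoly x x' n i 0 ⊔ Wpoly x x' n i 0 else Vpoly x x' n i 0) (n - 1)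

/-- The identity (H_{m,n}) (intended for `m, n ≥ 1`); the common base point is
`x 0 = y 0 = t`. -/
def IdHmn (m n : ℕ) (L : Type*) [Lattice L] : Prop :=
  ∀ x x' y y' : ℕ → L, x 0 = y 0 →
    Upoly x x' m 0 ⊓ Upoly y y' n 0 =
      bigJoin (fun i =>
          if i + 2 ≤ m then
            (Vpoly x x' m i 0 ⊓ Upoly y y' n 0) ⊔ (Wpoly x x' m i 0 ⊓ Upoly y y' n 0)
          else Vpoly x x' m i 0 ⊓ Upoly y y' n 0) (m - 1)
      ⊔ bigJoin (fun j =>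
          if j + 2 ≤ n then
            (Upoly x x' m 0 ⊓ Vpoly y y' n j 0) ⊔ (Upoly x x' m 0 ⊓ Wpoly y y' n j 0)
          else Upoly x x' m 0 ⊓ Vpoly y y' n j 0) (n - 1)
      ⊔ (Upoly x x' m 0 ⊓ Upoly y y' n 0 ⊓ (x 1 ⊔ y' 1) ⊓ (x' 1 ⊔ y 1))

/-- `p` is join-irreducible: `p = x ⊔ y` implies `p = x` or `p = y`. -/
def JIrr {L : Type*} [Lattice L] (p : L) : Prop :=
  ∀ x y : L, p = x ⊔ y → p = x ∨ p = y

/-- The join-dependency relation `p D q`. -/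
def DRel {L : Type*} [Lattice L] (p q : L) : Prop :=
  p ≠ q ∧ ∃ x : L, p ≤ q ⊔ x ∧ ∀ y < q, ¬ p ≤ y ⊔ x

/-- A subset `S` of a lattice `L` is a join-seed. -/
def JoinSeed (L : Type*) [Lattice L] (S : Set L) : Prop :=
  (∀ p ∈ S, JIrr p) ∧
  (∀ a : L, ∃ T ⊆ S, IsLUB T a) ∧
  (∀ p ∈ S, ∀ a b : L, p ≤ a ⊔ b → ¬ p ≤ a → ¬ p ≤ b →
    ∃ x ∈ S, ∃ y ∈ S, x ≤ a ∧ y ≤ b ∧ p ≤ x ⊔ y ∧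
      (∀ x' < x, ¬ p ≤ x' ⊔ y) ∧ (∀ y' < y, ¬ p ≤ x ⊔ y'))

/-- The poset `P_{I,J} = I ∪ {p} ∪ J`, where every element of `I` is below `p`,
`p` is below every element of `J`, every element of `I` is below every element
of `J`, and there are no other strict comparabilities. -/
def PIJ (I J : Type*) : Type _ := I ⊕ (Unit ⊕ J)

namespace PIJ

variable {I J : Type*}

/-- The rank (height) of an element of `P_{I,J}`. -/
def rank (a : PIJ I J) : ℕ :=
  Sum.elim (fun _ => 0) (Sum.elim (fun _ => 1) fun _ => 2) a

instance : PartialOrder (PIJ I J) where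
  le a b := a = b ∨ rank a < rank b
  le_refl a := Or.inl rfl
  le_trans a b c hab hbc := by
    rcases hab with rfl | h
    · exact hbc
    · rcases hbc with rfl | h'
      · exact Or.inr h
      · exact Or.inr (h.trans h')
  le_antisymm a b hab hba := by
    rcases hab with rfl | h
    · rfl
    · rcases hba with rfl | h'
      · rfl
      · omega

end PIJ

/-- A poset is tree-like if it has no infinite bounded chain and between any two
points there is at most one repetition-free finite path with respect to the
covering relation. -/
def TreeLike (P : Type*) [PartialOrder P] : Prop :=
  (∀ C : Set P, IsChain (· ≤ ·) C → BddAbove C → BddBelow C → C.Finite) ∧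
  (∀ a b : P, ∀ l₁ l₂ : List P,
    l₁.Nodup → l₁.head? = some a → l₁.getLast? = some b →
      l₁.Chain' (fun u v => u ⋖ v ∨ v ⋖ u) →
    l₂.Nodup → l₂.head? = some a → l₂.getLast? = some b →
      l₂.Chain' (fun u v => u ⋖ v ∨ v ⋖ u) →
    l₁ = l₂)

/-- A subset `U` of a poset `P` is `D`-closed. -/
def DClosed {P : Type*} [PartialOrder P] (U : Set P) : Prop :=
  ∀ x p y : P, x < p → p < y → (x ∈ U ∨ y ∈ U) → p ∈ U

/-- A complete congruence of a complete lattice. -/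
structure IsCompleteCongr {L : Type*} [CompleteLattice L] (θ : L → L → Prop) : Prop where
  refl : ∀ x, θ x x
  symm : ∀ {x y}, θ x y → θ y x
  trans : ∀ {x y z}, θ x y → θ y z → θ x z
  sup : ∀ {a b c d}, θ a b → θ c d → θ (a ⊔ c) (b ⊔ d)
  inf : ∀ {a b c d}, θ a b → θ c d → θ (a ⊓ c) (b ⊓ d)
  cSup : ∀ (x : L) (Y : Set L), Y.Nonempty → (∀ y ∈ Y, θ x y) → θ x (sSup Y)
  cInf : ∀ (x : L) (Y : Set L), Y.Nonempty → (∀ y ∈ Y, θ x y) → θ x (sInf Y)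

/-- The map `h_U : Co(P) → Co(P ∖ U)`, `X ↦ X ∖ U`. -/
def coRestrict {P : Type*} [PartialOrder P] (U : Set P) (X : Co P) :
    Co {p : P // p ∉ U} :=
  ⟨Subtype.val ⁻¹' X.1, by
    constructor
    rintro a ha b hb z hz
    exact X.2.out ha hb ⟨hz.1, hz.2⟩⟩

/-- The lattice `D(P)` of all `D`-closed subsets of a poset `P`. -/
def DSub (P : Type*) [PartialOrder P] : Type _ := {U : Set P // DClosed U}

namespace DSub

variable {P : Type*} [PartialOrder P]

instance : PartialOrder (DSub P) := Subtype.partialOrder _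

instance : InfSet (DSub P) :=
  ⟨fun S => ⟨⋂ U ∈ S, U.1, by
    intro x p y h1 h2 h3
    simp only [Set.mem_iInter] at h3 ⊢
    intro U hU
    exact U.2 x p y h1 h2 (h3.imp (fun h => h U hU) fun h => h U hU)⟩⟩

noncomputable instance : CompleteLattice (DSub P) :=
  completeLatticeOfInf (DSub P) (by
    intro S
    constructor
    · intro t ht
      exact Set.biInter_subset_of_mem (t := fun U => U.1) ht
    · intro b hb
      exact Set.subset_iInter₂ fun t ht => hb ht)

end DSub

/-!
A `D`-closed set `U` yields the complete congruence `X ∖ U = Y ∖ U`: the map `X ↦ X ∖ U`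
preserves arbitrary meets, and also arbitrary joins because a point of the convex hull outside
`U` lies between two points of the union outside `U` (`D`-closedness excludes an endpoint in
`U`). Conversely, the points `p` with `{p} ≡ ∅` under a complete congruence `θ` form a
`D`-closed set `V_θ`, nonempty when `θ` is nontrivial, and `θ` contains the congruence of `V_θ`,
since joining `⋁_{p ∈ V_θ} {p} ≡ ∅` to `X` and to `Y` gives the same set. So a least nonempty
`D`-closed set gives a least nontrivial complete congruence, and conversely.
-/

namespace IsCompleteCongr

variable {L : Type*} [CompleteLattice L] {θ : L → L → Prop}

theorem of_completeLatticeHom {M : Type*} [CompleteLattice M] (f : CompleteLatticeHom L M) :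
    IsCompleteCongr (fun x y => f x = f y) where
  refl _ := rfl
  symm h := h.symm
  trans h₁ h₂ := h₁.trans h₂
  sup h₁ h₂ := by simp only [map_sup, h₁, h₂]
  inf h₁ h₂ := by simp only [map_inf, h₁, h₂]
  cSup x Y hY hxY := by
    rw [map_sSup, (Set.image_congr fun y hy => (hxY y hy).symm).trans (hY.image_const _),
      sSup_singleton]
  cInf x Y hY hxY := by
    rw [map_sInf, (Set.image_congr fun y hy => (hxY y hy).symm).trans (hY.image_const _),
      sInf_singleton]

theorem rel_bot_sSup (h : IsCompleteCongr θ) {S : Set L} (hS : ∀ s ∈ S, θ s ⊥) :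
    θ ⊥ (sSup S) := by
  have := h.cSup ⊥ (insert ⊥ S) (Set.insert_nonempty _ _)
    (Set.forall_mem_insert.2 ⟨h.refl ⊥, fun s hs => h.symm (hS s hs)⟩)
  rwa [sSup_insert, bot_sup_eq] at this

theorem rel_of_sup_eq (h : IsCompleteCongr θ) {x y w : L} (hw : θ ⊥ w) (hxy : x ⊔ w = y ⊔ w) :
    θ x y := by
  have hx : θ x (x ⊔ w) := by simpa only [sup_bot_eq] using h.sup (h.refl x) hw
  have hy : θ y (y ⊔ w) := by simpa only [sup_bot_eq] using h.sup (h.refl y) hw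
  exact h.trans hx (hxy ▸ h.symm hy)

end IsCompleteCongr

namespace Co

variable {P : Type*} [PartialOrder P]

@[ext]
theorem ext {X Y : Co P} (h : X.1 = Y.1) : X = Y := Subtype.ext h

theorem le_iff_subset {X Y : Co P} : X ≤ Y ↔ X.1 ⊆ Y.1 := Iff.rfl

theorem coe_sInf (S : Set (Co P)) : (sInf S).1 = ⋂ X ∈ S, X.1 := rfl

theorem coe_inf (X Y : Co P) : (X ⊓ Y).1 = X.1 ∩ Y.1 := by
  change ⋂ Z ∈ ({X, Y} : Set (Co P)), Z.1 = _
  simp only [Set.mem_insert_iff, Set.mem_singleton_iff, Set.iInter_iInter_eq_or_left,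
    Set.iInter_iInter_eq_left]

theorem coe_bot : (⊥ : Co P).1 = ∅ :=
  Set.subset_empty_iff.1 (le_iff_subset.1 (bot_le (a := emp)))

theorem mem_sSup {S : Set (Co P)} {X : Co P} {p : P} (hX : X ∈ S) (hp : p ∈ X.1) :
    p ∈ (sSup S).1 :=
  le_iff_subset.1 (le_sSup hX) hp

theorem exists_le_le_of_mem_sSup {S : Set (Co P)} {p : P} (hp : p ∈ (sSup S).1) :
    ∃ a ∈ ⋃ X ∈ S, X.1, ∃ b ∈ ⋃ X ∈ S, X.1, a ≤ p ∧ p ≤ b := by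
  let hull : Co P := ⟨{p | ∃ a ∈ ⋃ X ∈ S, X.1, ∃ b ∈ ⋃ X ∈ S, X.1, a ≤ p ∧ p ≤ b}, ⟨by
    rintro _ ⟨a, ha, -, -, hax, -⟩ _ ⟨-, -, b, hb, -, hyb⟩ z hz
    exact ⟨a, ha, b, hb, hax.trans hz.1, hz.2.trans hyb⟩⟩⟩
  have hle : sSup S ≤ hull := sSup_le fun X hX q hq =>
    have hq' : q ∈ ⋃ X ∈ S, X.1 := Set.mem_biUnion hX hq
    ⟨q, hq', q, hq', le_rfl, le_rfl⟩
  exact hle hp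

theorem sngl_ne_bot (p : P) : sngl p ≠ ⊥ := fun h =>
  Set.singleton_ne_empty p (congrArg Subtype.val h |>.trans coe_bot)

theorem sngl_le_iff {p : P} {X : Co P} : sngl p ≤ X ↔ p ∈ X.1 := Set.singleton_subset_iff

theorem sngl_inf_of_mem {p : P} {X : Co P} (hp : p ∈ X.1) : sngl p ⊓ X = sngl p :=
  inf_eq_left.2 (sngl_le_iff.2 hp)

theorem sngl_inf_of_notMem {p : P} {X : Co P} (hp : p ∉ X.1) : sngl p ⊓ X = ⊥ := by
  ext q
  simp only [coe_inf, coe_bot, Set.mem_inter_iff, Set.mem_empty_iff_false, iff_false]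
  rintro ⟨rfl, hq⟩
  exact hp hq

end Co

section CollapsedPoints

variable {P : Type*} [PartialOrder P] {θ : Co P → Co P → Prop}

def collapsedPoints (θ : Co P → Co P → Prop) : Set P := {p | θ (Co.sngl p) ⊥}

theorem dClosed_collapsedPoints (h : IsCompleteCongr θ) : DClosed (collapsedPoints θ) := by
  intro x p y hxp hpy hxy
  have hp : p ∈ (Co.sngl x ⊔ Co.sngl y).1 :=
    (Co.sngl x ⊔ Co.sngl y).2.out (Co.sngl_le_iff.1 le_sup_left) (Co.sngl_le_iff.1 le_sup_right)
      ⟨hxp.le, hpy.le⟩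
  have hpx : p ∉ (Co.sngl x).1 := hxp.ne'
  have hpy' : p ∉ (Co.sngl y).1 := hpy.ne
  -- `{x} ⊔ {y}` contains `p` and is congruent to the singleton of the other endpoint.
  rcases hxy with hx | hy
  · have := h.inf (h.refl (Co.sngl p)) (h.sup hx (h.refl (Co.sngl y)))
    rwa [bot_sup_eq, Co.sngl_inf_of_mem hp, Co.sngl_inf_of_notMem hpy'] at this
  · have := h.inf (h.refl (Co.sngl p)) (h.sup (h.refl (Co.sngl x)) hy)
    rwa [sup_bot_eq, Co.sngl_inf_of_mem hp, Co.sngl_inf_of_notMem hpx] at this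

theorem mem_collapsedPoints_of_rel (h : IsCompleteCongr θ) {X Y : Co P} (hXY : θ X Y) {p : P}
    (hpX : p ∈ X.1) (hpY : p ∉ Y.1) : p ∈ collapsedPoints θ := by
  change θ (Co.sngl p) ⊥
  simpa only [Co.sngl_inf_of_mem hpX, Co.sngl_inf_of_notMem hpY] using
    h.inf (h.refl (Co.sngl p)) hXY

theorem collapsedPoints_nonempty (h : IsCompleteCongr θ) {X Y : Co P} (hXY : θ X Y)
    (hne : X ≠ Y) : (collapsedPoints θ).Nonempty := by
  by_cases hXsub : X.1 ⊆ Y.1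
  · obtain ⟨p, hpY, hpX⟩ := Set.not_subset.1 fun hYsub =>
      hne (Co.ext (hXsub.antisymm hYsub))
    exact ⟨p, mem_collapsedPoints_of_rel h (h.symm hXY) hpY hpX⟩
  · obtain ⟨p, hpX, hpY⟩ := Set.not_subset.1 hXsub
    exact ⟨p, mem_collapsedPoints_of_rel h hXY hpX hpY⟩

theorem IsCompleteCongr.rel_of_diff_collapsedPoints_subset (h : IsCompleteCongr θ) {X Y : Co P}
    (hXY : X.1 \ collapsedPoints θ ⊆ Y.1) (hYX : Y.1 \ collapsedPoints θ ⊆ X.1) : θ X Y := by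
  set W := sSup (Co.sngl '' collapsedPoints θ)
  have hW : θ ⊥ W := h.rel_bot_sSup (by rintro _ ⟨p, hp, rfl⟩; exact hp)
  have hVW : collapsedPoints θ ⊆ W.1 := fun p hp =>
    Co.mem_sSup (Set.mem_image_of_mem _ hp) (Set.mem_singleton p)
  have hsub : ∀ {A B : Co P}, A.1 \ collapsedPoints θ ⊆ B.1 → A ≤ B ⊔ W := fun hAB =>
    Co.le_iff_subset.2 <| Set.sdiff_subset_iff.1 hAB |>.trans <|
      Set.union_subset (hVW.trans (Co.le_iff_subset.1 le_sup_right))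
        (Co.le_iff_subset.1 le_sup_left)
  exact h.rel_of_sup_eq hW <|
    le_antisymm (sup_le (hsub hXY) le_sup_right) (sup_le (hsub hYX) le_sup_right)

end CollapsedPoints

section CoRestrict

variable {P : Type*} [PartialOrder P] {U : Set P}

theorem coRestrict_le_iff {X Y : Co P} : coRestrict U X ≤ coRestrict U Y ↔ X.1 \ U ⊆ Y.1 :=
  ⟨fun h p hp => h (a := ⟨p, hp.2⟩) hp.1, fun h q hq => h ⟨hq, q.2⟩⟩

theorem coRestrict_sInf (S : Set (Co P)) : coRestrict U (sInf S) = sInf (coRestrict U '' S) := by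
  ext q
  simp only [coRestrict, Co.coe_sInf, Set.biInter_image, Set.mem_preimage, Set.mem_iInter]

theorem coRestrict_sSup (hU : DClosed U) (S : Set (Co P)) :
    coRestrict U (sSup S) = sSup (coRestrict U '' S) := by
  refine le_antisymm (fun q hq => ?_) (sSup_le (Set.forall_mem_image.2 fun X hX =>
    coRestrict_le_iff.2 (Set.sdiff_subset.trans (Co.le_iff_subset.1 (le_sSup hX)))))
  have mem : ∀ {X : Co P} {r : {p // p ∉ U}}, X ∈ S → r.1 ∈ X.1 →
      r ∈ (sSup (coRestrict U '' S)).1 := fun hX hr =>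
    Co.mem_sSup (Set.mem_image_of_mem _ hX) hr
  obtain ⟨a, ha, b, hb, hap, hpb⟩ := Co.exists_le_le_of_mem_sSup hq
  simp only [Set.mem_iUnion, exists_prop] at ha hb
  obtain ⟨X, hX, haX⟩ := ha
  obtain ⟨Y, hY, hbY⟩ := hb
  -- An endpoint in `U` forces `q` onto the other endpoint, since `U` is `D`-closed.
  by_cases haU : a ∈ U
  · have : q.1 = b := by_contra fun hqb =>
      q.2 (hU a q b (hap.lt_of_ne fun e => q.2 (e ▸ haU)) (hpb.lt_of_ne hqb) (Or.inl haU))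
    exact mem hY (this ▸ hbY)
  by_cases hbU : b ∈ U
  · have : a = q.1 := by_contra fun haq =>
      q.2 (hU a q b (hap.lt_of_ne haq) (hpb.lt_of_ne fun e => q.2 (e ▸ hbU)) (Or.inr hbU))
    exact mem hX (this ▸ haX)
  exact (sSup (coRestrict U '' S)).2.out (mem (r := ⟨a, haU⟩) hX haX)
    (mem (r := ⟨b, hbU⟩) hY hbY) ⟨hap, hpb⟩

def coRestrictHom (hU : DClosed U) : CompleteLatticeHom (Co P) (Co {p : P // p ∉ U}) where
  toFun := coRestrict U
  map_sInf' := coRestrict_sInf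
  map_sSup' := coRestrict_sSup hU

theorem coRestrictHom_eq_iff (hU : DClosed U) {X Y : Co P} :
    coRestrictHom hU X = coRestrictHom hU Y ↔ X.1 \ U ⊆ Y.1 ∧ Y.1 \ U ⊆ X.1 :=
  le_antisymm_iff.trans (and_congr coRestrict_le_iff coRestrict_le_iff)

theorem coRestrictHom_sngl_eq_bot_iff (hU : DClosed U) {p : P} :
    coRestrictHom hU (Co.sngl p) = coRestrictHom hU ⊥ ↔ p ∈ U := by
  rw [coRestrictHom_eq_iff, Co.coe_bot]
  simp only [Co.sngl, Set.subset_empty_iff, Set.sdiff_eq_empty, Set.singleton_subset_iff,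
    Set.empty_sdiff, Set.empty_subset, and_true]

end CoRestrict

theorem stmt16 (P : Type*) [PartialOrder P] :
    (∃ θ : Co P → Co P → Prop, IsCompleteCongr θ ∧ (∃ X Y : Co P, θ X Y ∧ X ≠ Y) ∧
      ∀ θ' : Co P → Co P → Prop, IsCompleteCongr θ' → (∃ X Y : Co P, θ' X Y ∧ X ≠ Y) →
        ∀ X Y : Co P, θ X Y → θ' X Y) ↔
    (∃ U : Set P, DClosed U ∧ U.Nonempty ∧
      ∀ V : Set P, DClosed V → V.Nonempty → U ⊆ V) := by
  constructor
  · rintro ⟨θ, hθ, ⟨X, Y, hXY, hne⟩, hleast⟩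
    refine ⟨collapsedPoints θ, dClosed_collapsedPoints hθ, collapsedPoints_nonempty hθ hXY hne,
      fun V hV ⟨q, hq⟩ p hp => ?_⟩
    refine (coRestrictHom_sngl_eq_bot_iff hV).1 (hleast _
      (IsCompleteCongr.of_completeLatticeHom (coRestrictHom hV)) ?_ _ _ hp)
    exact ⟨Co.sngl q, ⊥, (coRestrictHom_sngl_eq_bot_iff hV).2 hq, Co.sngl_ne_bot q⟩
  · rintro ⟨U, hU, ⟨p, hp⟩, hleast⟩
    refine ⟨_, IsCompleteCongr.of_completeLatticeHom (coRestrictHom hU),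
      ⟨Co.sngl p, ⊥, (coRestrictHom_sngl_eq_bot_iff hU).2 hp, Co.sngl_ne_bot p⟩,
      fun θ hθ ⟨X₀, Y₀, hXY₀, hne₀⟩ X Y hXY => ?_⟩
    have hUV : U ⊆ collapsedPoints θ :=
      hleast _ (dClosed_collapsedPoints hθ) (collapsedPoints_nonempty hθ hXY₀ hne₀)
    obtain ⟨hXY, hYX⟩ := (coRestrictHom_eq_iff hU).1 hXY
    exact hθ.rel_of_diff_collapsedPoints_subset ((Set.sdiff_subset_sdiff_right hUV).trans hXY)
      ((Set.sdiff_subset_sdiff_right hUV).trans hYX)
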